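/- Let θ_c' be the unique real root of t³ + t² + 3t − 1 = 0. There exists θ_c ∈ (0.141, 0.142) with θ_c < θ_c' such that the number of solutions (x, y) with x, y > 0 of the boundary-law system x = (x² + θy² + θ²)/(θ²x² + θy² + 1), y = (θx² + y² + θ)/(θ²x² + θy² + 1) is: exactly one if θ > θ_c'; exactly three if θ = θ_c'; exactly five if θ_c < θ < θ_c'; exactly six if θ = θ_c; and exactly seven if 0 < θ < θ_c. -/

import Mathlib

/-!
Clearing denominators, the first equation factors as
`(x - 1)(θ²(x² + x + 1) + θy² - x) = 0`.

On the line `x = 1` the second equation is the cubic `θy³ - y² + (θ² + 1)y - 2θ = 0`, all of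
whose real roots are positive. Dividing out one real root leaves a quadratic, so the number of
distinct roots (1, 2 or 3) is read off the sign of the cubic's discriminant, a degree-7
polynomial in `θ` that changes sign exactly once on `θ > 0`, at `θ_c`.

Off that line `y = x / (θ(x + 1))`, and `x` is a positive root of a palindromic quartic `Q`
with `4θ Q(x) = q(x)² - (θ - 1)(θ³ + θ² + 3θ - 1) x²` for a palindromic quadratic `q`. For
`θ ≤ θ_c'` this is a product of two palindromic quadratics, each with two positive roots, which
coincide exactly when `θ = θ_c'`; for `θ > θ_c'` the quartic is positive on `x > 0`.
-/

/-- The set of positive solutions of the boundary-law system of the 3-state SOS model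
on the binary tree with parameter `θ`. -/
def sosSolutionSet (θ : ℝ) : Set (ℝ × ℝ) :=
  {p : ℝ × ℝ | 0 < p.1 ∧ 0 < p.2 ∧
    p.1 = (p.1 ^ 2 + θ * p.2 ^ 2 + θ ^ 2) / (θ ^ 2 * p.1 ^ 2 + θ * p.2 ^ 2 + 1) ∧
    p.2 = (θ * p.1 ^ 2 + p.2 ^ 2 + θ) / (θ ^ 2 * p.1 ^ 2 + θ * p.2 ^ 2 + 1)}

open Set

section Quadratic

def quadraticZeroSet (a b c : ℝ) : Set ℝ := {x | a * (x * x) + b * x + c = 0}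

variable {a b c : ℝ}

theorem quadraticZeroSet_eq_empty (hd : discrim a b c < 0) : quadraticZeroSet a b c = ∅ :=
  eq_empty_of_forall_notMem fun x ↦
    quadratic_ne_zero_of_discrim_ne_sq (fun s hs ↦ by nlinarith [sq_nonneg s]) x

theorem quadraticZeroSet_eq_singleton (ha : a ≠ 0) (hd : discrim a b c = 0) :
    quadraticZeroSet a b c = {-b / (2 * a)} :=
  ext fun x ↦ quadratic_eq_zero_iff_of_discrim_eq_zero ha hd x

theorem encard_quadraticZeroSet (ha : a ≠ 0) (hd : 0 < discrim a b c) :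
    (quadraticZeroSet a b c).encard = 2 := by
  set s := √(discrim a b c)
  have hs : discrim a b c = s * s := (Real.mul_self_sqrt hd.le).symm
  have hs0 : 0 < s := Real.sqrt_pos.2 hd
  rw [show quadraticZeroSet a b c = {(-b + s) / (2 * a), (-b - s) / (2 * a)} from
      ext fun x ↦ quadratic_eq_zero_iff ha hs x,
    encard_pair (by rw [Ne, div_left_inj' (mul_ne_zero two_ne_zero ha)]; linarith)]

theorem pos_of_mem_quadraticZeroSet {x : ℝ} (ha : 0 ≤ a) (hb : b < 0) (hc : 0 < c)
    (hx : x ∈ quadraticZeroSet a b c) : 0 < x := by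
  have hx : a * (x * x) + b * x + c = 0 := hx
  by_contra! hx0
  nlinarith [mul_nonneg ha (mul_self_nonneg x), mul_nonneg_of_nonpos_of_nonpos hb.le hx0]

theorem discrim_pos_of_two_mul_lt {m : ℝ} (ha : 0 < a) (h : 2 * a < m) :
    0 < discrim a (-m) a := by
  simp only [discrim]
  nlinarith

end Quadratic

namespace Cubic

def zeroSet (P : Cubic ℝ) : Set ℝ := {y | P.a * y ^ 3 + P.b * y ^ 2 + P.c * y + P.d = 0}

variable {P : Cubic ℝ} {r : ℝ}

theorem zeroSet_eq_insert (hr : r ∈ P.zeroSet) :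
    P.zeroSet =
      insert r (quadraticZeroSet P.a (P.a * r + P.b) (P.a * r ^ 2 + P.b * r + P.c)) := by
  ext y
  have hfac : P.a * y ^ 3 + P.b * y ^ 2 + P.c * y + P.d =
      (y - r) * (P.a * (y * y) + (P.a * r + P.b) * y + (P.a * r ^ 2 + P.b * r + P.c)) := by
    have hr : P.a * r ^ 3 + P.b * r ^ 2 + P.c * r + P.d = 0 := hr
    linear_combination hr
  simp only [zeroSet, quadraticZeroSet, mem_ofPred_eq, mem_insert_iff, hfac, mul_eq_zero,
    sub_eq_zero]

theorem discr_eq_discrim_mul_sq (hr : r ∈ P.zeroSet) :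
    P.discr = discrim P.a (P.a * r + P.b) (P.a * r ^ 2 + P.b * r + P.c) *
      (P.a * (r * r) + (P.a * r + P.b) * r + (P.a * r ^ 2 + P.b * r + P.c)) ^ 2 := by
  obtain ⟨a, b, c, d⟩ := P
  obtain rfl : d = -(a * r ^ 3 + b * r ^ 2 + c * r) := by
    have hr : a * r ^ 3 + b * r ^ 2 + c * r + d = 0 := hr
    linear_combination hr
  simp only [discr, discrim]
  ring

theorem encard_zeroSet_of_discr_neg (hr : r ∈ P.zeroSet) (hd : P.discr < 0) :
    P.zeroSet.encard = 1 := by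
  rw [discr_eq_discrim_mul_sq hr] at hd
  rw [zeroSet_eq_insert hr, quadraticZeroSet_eq_empty (neg_of_mul_neg_left hd (sq_nonneg _)),
    insert_empty_eq, encard_singleton]

theorem encard_zeroSet_of_discr_pos (ha : P.a ≠ 0) (hr : r ∈ P.zeroSet) (hd : 0 < P.discr) :
    P.zeroSet.encard = 3 := by
  rw [discr_eq_discrim_mul_sq hr] at hd
  have hr' : r ∉ quadraticZeroSet P.a (P.a * r + P.b) (P.a * r ^ 2 + P.b * r + P.c) :=
    fun h ↦ by simp only [quadraticZeroSet, mem_ofPred_eq] at h; simp [h] at hd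
  rw [zeroSet_eq_insert hr, encard_insert_of_notMem hr',
    encard_quadraticZeroSet ha (pos_of_mul_pos_left hd (sq_nonneg _))]
  rfl

theorem encard_zeroSet_of_discr_eq_zero (ha : P.a ≠ 0) (hr : r ∈ P.zeroSet) (hd : P.discr = 0)
    (hb : P.b ^ 2 ≠ 3 * P.a * P.c) : P.zeroSet.encard = 2 := by
  rw [discr_eq_discrim_mul_sq hr, mul_eq_zero] at hd
  by_cases hq : P.a * (r * r) + (P.a * r + P.b) * r + (P.a * r ^ 2 + P.b * r + P.c) = 0
  · have hdisc := discrim_eq_sq_of_quadratic_eq_zero hq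
    have hdisc_pos : 0 < discrim P.a (P.a * r + P.b) (P.a * r ^ 2 + P.b * r + P.c) := by
      refine hdisc ▸ (sq_nonneg _).lt_of_ne' fun h ↦ hb ?_
      have hb' : P.b = -3 * P.a * r := by linear_combination pow_eq_zero_iff two_ne_zero |>.1 h
      rw [hb'] at hq ⊢
      linear_combination (-3 * P.a) * hq
    rw [zeroSet_eq_insert hr, insert_eq_of_mem (by exact hq),
      encard_quadraticZeroSet ha hdisc_pos]
  · have hdisc : discrim P.a (P.a * r + P.b) (P.a * r ^ 2 + P.b * r + P.c) = 0 :=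
      hd.resolve_right fun h ↦ hq (pow_eq_zero_iff two_ne_zero |>.1 h)
    rw [zeroSet_eq_insert hr, encard_insert_of_notMem (by exact hq),
      quadraticZeroSet_eq_singleton ha hdisc, encard_singleton]
    rfl

end Cubic

def sosCubic (θ : ℝ) : Cubic ℝ := ⟨θ, -1, θ ^ 2 + 1, -2 * θ⟩

section SosCubic

variable {θ : ℝ}

theorem mem_sosCubic_zeroSet {y : ℝ} :
    y ∈ (sosCubic θ).zeroSet ↔ θ * y ^ 3 - y ^ 2 + (θ ^ 2 + 1) * y - 2 * θ = 0 := by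
  simp only [Cubic.zeroSet, sosCubic, mem_ofPred_eq]
  ring_nf

theorem pos_of_mem_sosCubic_zeroSet (hθ : 0 < θ) {y : ℝ} (hy : y ∈ (sosCubic θ).zeroSet) :
    0 < y := by
  rw [mem_sosCubic_zeroSet] at hy
  by_contra! h
  nlinarith [mul_nonpos_of_nonneg_of_nonpos hθ.le (Odd.pow_nonpos (by decide : Odd 3) h),
    mul_nonpos_of_nonneg_of_nonpos (by positivity : (0 : ℝ) ≤ θ ^ 2 + 1) h, sq_nonneg y]

theorem exists_mem_sosCubic_zeroSet (hθ : 0 < θ) : ∃ r, r ∈ (sosCubic θ).zeroSet := by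
  have hcont : Continuous fun y : ℝ ↦ θ * y ^ 3 - y ^ 2 + (θ ^ 2 + 1) * y - 2 * θ := by fun_prop
  have hpos : 0 < θ * (2 / θ) ^ 3 - (2 / θ) ^ 2 + (θ ^ 2 + 1) * (2 / θ) - 2 * θ := by
    field_simp
    ring_nf
    positivity
  obtain ⟨r, -, hr⟩ := intermediate_value_Icc (by positivity : (0 : ℝ) ≤ 2 / θ)
    hcont.continuousOn ⟨by linarith, hpos.le⟩
  exact ⟨r, mem_sosCubic_zeroSet.2 hr⟩

theorem sosCubic_discr (θ : ℝ) : (sosCubic θ).discr =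
    -(4 * θ ^ 7 + 12 * θ ^ 5 + 71 * θ ^ 4 + 12 * θ ^ 3 - 38 * θ ^ 2 + 12 * θ - 1) := by
  simp only [Cubic.discr, sosCubic]
  ring

end SosCubic

section DiscrSign

variable {θ : ℝ}

theorem sosCubic_discr_pos_of_le (hθ : 0 < θ) (h : θ ≤ 0.1) : 0 < (sosCubic θ).discr := by
  rw [sosCubic_discr]
  have e2 : θ ^ 2 ≤ 0.01 := by nlinarith
  have e3 : θ ^ 3 ≤ 0.001 := by nlinarith
  have e4 : θ ^ 4 ≤ 0.0001 := by nlinarith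
  have e5 : θ ^ 5 ≤ 0.00001 := by nlinarith
  have e7 : θ ^ 7 ≤ 0.0000001 := by nlinarith [pow_pos hθ 2, pow_pos hθ 5]
  have h1 : 4 * θ ^ 7 + 12 * θ ^ 5 + 71 * θ ^ 4 + 12 * θ ^ 3 ≤ 0.2 * θ := by
    nlinarith [pow_pos hθ 2, pow_pos hθ 3, pow_pos hθ 4, pow_pos hθ 5, pow_pos hθ 7]
  nlinarith [sq_nonneg (38 * θ - 6.1)]

theorem strictAntiOn_sosCubic_discr :
    StrictAntiOn (fun θ ↦ (sosCubic θ).discr) (Icc 0.1 0.2) := by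
  simp only [sosCubic_discr]
  refine strictAntiOn_of_deriv_neg (convex_Icc _ _) (by fun_prop) fun t ht ↦ ?_
  obtain ⟨h1, h2⟩ : 0.1 < t ∧ t < 0.2 := by rwa [interior_Icc] at ht
  simp (disch := fun_prop)
  nlinarith [pow_pos (by linarith : (0 : ℝ) < t) 4, pow_pos (by linarith : (0 : ℝ) < t) 6,
    mul_pos (by linarith : (0 : ℝ) < t - 0.1) (by linarith : (0 : ℝ) < t)]

theorem sosCubic_discr_neg_of_ge (h : 0.2 ≤ θ) : (sosCubic θ).discr < 0 := by
  rw [sosCubic_discr, neg_neg_iff_pos]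
  have hθ : 0 < θ := by linarith
  rcases le_or_gt θ 1 with h1 | h1
  · nlinarith [pow_pos hθ 7, pow_pos hθ 5, sq_nonneg (θ - 0.29),
      mul_nonneg (mul_nonneg (sub_nonneg.2 h) (sub_nonneg.2 h1)) (sq_nonneg (θ - 0.29)),
      mul_nonneg (sub_nonneg.2 h) (sub_nonneg.2 h1),
      mul_nonneg (sub_nonneg.2 h) (sq_nonneg (θ - 0.29)),
      mul_nonneg (sub_nonneg.2 h1) (sq_nonneg (θ - 0.29))]
  · nlinarith [pow_pos hθ 7, pow_pos hθ 5, pow_pos hθ 3,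
      mul_pos (mul_pos hθ hθ) (mul_pos hθ hθ), sq_nonneg (θ - 1),
      mul_nonneg (sq_nonneg θ) (sq_nonneg (θ - 1)), mul_pos hθ hθ]

theorem exists_sosCubic_discr_sign_change : ∃ θc ∈ Ioo (0.141 : ℝ) 0.142,
    (sosCubic θc).discr = 0 ∧ (∀ θ, 0 < θ → θ < θc → 0 < (sosCubic θ).discr) ∧
      ∀ θ, θc < θ → (sosCubic θ).discr < 0 := by
  have hcont : Continuous fun θ : ℝ ↦ (sosCubic θ).discr := by
    simp only [sosCubic_discr]; fun_prop
  obtain ⟨θc, ⟨h141, h142⟩, hθc⟩ : (0 : ℝ) ∈ (fun θ ↦ (sosCubic θ).discr) '' Ioo 0.141 0.142 :=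
    intermediate_value_Ioo' (by norm_num) hcont.continuousOn
      ⟨by norm_num [sosCubic_discr], by norm_num [sosCubic_discr]⟩
  refine ⟨θc, ⟨h141, h142⟩, hθc, fun θ hθ hlt ↦ ?_, fun θ hgt ↦ ?_⟩
  · rcases le_or_gt θ 0.1 with h | h
    · exact sosCubic_discr_pos_of_le hθ h
    · rw [← hθc]
      exact strictAntiOn_sosCubic_discr ⟨h.le, by linarith⟩ ⟨by linarith, by linarith⟩ hlt
  · rcases le_or_gt θ 0.2 with h | h
    · rw [← hθc]
      exact strictAntiOn_sosCubic_discr ⟨by linarith, by linarith⟩ ⟨by linarith, h⟩ hgt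
    · exact sosCubic_discr_neg_of_ge h.le

end DiscrSign

def sosQuartic (θ x : ℝ) : ℝ :=
  θ ^ 3 * x ^ 4 + (3 * θ ^ 3 - θ) * x ^ 3 + (4 * θ ^ 3 - 2 * θ + 1) * x ^ 2 + (3 * θ ^ 3 - θ) * x +
    θ ^ 3

section SosQuartic

variable {θ : ℝ}

theorem sosQuartic_one_pos (hθ : 0 < θ) : 0 < sosQuartic θ 1 := by
  simp only [sosQuartic]
  nlinarith [mul_nonneg (sq_nonneg (3 * θ - 1)) hθ.le, sq_nonneg (3 * θ - 1)]

theorem four_mul_sosQuartic (θ x : ℝ) :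
    4 * θ * sosQuartic θ x = (2 * θ ^ 2 * (x * x) - (1 - 3 * θ ^ 2) * x + 2 * θ ^ 2) ^ 2 -
      (θ - 1) * (θ ^ 3 + θ ^ 2 + 3 * θ - 1) * x ^ 2 := by
  simp only [sosQuartic]
  ring

theorem sosQuartic_pos (hθ : 0 < θ) (hg : 0 < θ ^ 3 + θ ^ 2 + 3 * θ - 1) {x : ℝ} (hx : 0 < x) :
    0 < sosQuartic θ x := by
  rcases lt_or_ge θ 1 with hθ1 | hθ1
  · have hE : (θ - 1) * (θ ^ 3 + θ ^ 2 + 3 * θ - 1) < 0 := mul_neg_of_neg_of_pos (by linarith) hg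
    have h4 := four_mul_sosQuartic θ x
    nlinarith [sq_nonneg (2 * θ ^ 2 * (x * x) - (1 - 3 * θ ^ 2) * x + 2 * θ ^ 2),
      mul_pos (neg_pos.2 hE) (pow_pos hx 2)]
  · have h1 : 0 ≤ 3 * θ ^ 3 - θ := by nlinarith
    have h2 : 0 ≤ 4 * θ ^ 3 - 2 * θ + 1 := by nlinarith
    simp only [sosQuartic]
    nlinarith [mul_nonneg h1 (pow_pos hx 3).le, mul_nonneg h2 (sq_nonneg x), mul_nonneg h1 hx.le,
      mul_pos (pow_pos hθ 3) (pow_pos hx 4), pow_pos hθ 3]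

theorem sosQuartic_zeroSet_eq_empty (hθ : 0 < θ) (hg : 0 < θ ^ 3 + θ ^ 2 + 3 * θ - 1) :
    {x | 0 < x ∧ sosQuartic θ x = 0} = ∅ :=
  eq_empty_of_forall_notMem fun _ ⟨hx, hQ⟩ ↦ (sosQuartic_pos hθ hg hx).ne' hQ

theorem sosQuartic_zeroSet_eq_union (hθ : 0 < θ) {s : ℝ}
    (hs : s ^ 2 = (θ - 1) * (θ ^ 3 + θ ^ 2 + 3 * θ - 1)) (hs0 : 0 ≤ s)
    (hm : 0 < 1 - 3 * θ ^ 2 - s) :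
    {x | 0 < x ∧ sosQuartic θ x = 0} =
      quadraticZeroSet (2 * θ ^ 2) (-(1 - 3 * θ ^ 2 + s)) (2 * θ ^ 2) ∪
        quadraticZeroSet (2 * θ ^ 2) (-(1 - 3 * θ ^ 2 - s)) (2 * θ ^ 2) := by
  have hfac (x : ℝ) : 4 * θ * sosQuartic θ x =
      (2 * θ ^ 2 * (x * x) + -(1 - 3 * θ ^ 2 + s) * x + 2 * θ ^ 2) *
        (2 * θ ^ 2 * (x * x) + -(1 - 3 * θ ^ 2 - s) * x + 2 * θ ^ 2) := by
    rw [four_mul_sosQuartic]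
    linear_combination x ^ 2 * hs
  ext x
  have hQ : sosQuartic θ x = 0 ↔
      2 * θ ^ 2 * (x * x) + -(1 - 3 * θ ^ 2 + s) * x + 2 * θ ^ 2 = 0 ∨
        2 * θ ^ 2 * (x * x) + -(1 - 3 * θ ^ 2 - s) * x + 2 * θ ^ 2 = 0 := by
    rw [← mul_eq_zero, ← hfac, mul_eq_zero, or_iff_right (mul_ne_zero four_ne_zero hθ.ne')]
  simp only [quadraticZeroSet, mem_ofPred_eq, mem_union, hQ]
  refine ⟨And.right, fun hx ↦ ⟨?_, hx⟩⟩
  rcases hx with hx | hx <;>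
    exact pos_of_mem_quadraticZeroSet (by positivity) (by linarith) (by positivity) hx

theorem encard_sosQuartic_zeroSet_of_eq_zero (hθ : 0 < θ) (hg : θ ^ 3 + θ ^ 2 + 3 * θ - 1 = 0) :
    {x | 0 < x ∧ sosQuartic θ x = 0}.encard = 2 := by
  have h7 : 7 * θ ^ 2 < 1 := by nlinarith
  rw [sosQuartic_zeroSet_eq_union hθ (s := 0) (by rw [hg]; ring) le_rfl (by linarith), add_zero,
    sub_zero, union_self]
  exact encard_quadraticZeroSet (by positivity) (discrim_pos_of_two_mul_lt (by positivity)
    (by linarith))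

theorem encard_sosQuartic_zeroSet_of_neg (hθ : 0 < θ) (hg : θ ^ 3 + θ ^ 2 + 3 * θ - 1 < 0) :
    {x | 0 < x ∧ sosQuartic θ x = 0}.encard = 4 := by
  have h7 : 7 * θ ^ 2 < 1 := by nlinarith
  have hE : 0 < (θ - 1) * (θ ^ 3 + θ ^ 2 + 3 * θ - 1) := mul_pos_of_neg_of_neg (by nlinarith) hg
  set s := √((θ - 1) * (θ ^ 3 + θ ^ 2 + 3 * θ - 1))
  have hs : s ^ 2 = (θ - 1) * (θ ^ 3 + θ ^ 2 + 3 * θ - 1) := Real.sq_sqrt hE.le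
  have hs0 : 0 < s := Real.sqrt_pos.2 hE
  have hθ2 : 0 < θ ^ 2 := by positivity
  -- `s² < (1 - 7θ²)²` reduces to `0 < 4θ(12θ³ - 4θ + 1) = 4θ Q(1)`.
  have hs7 : s < 1 - 7 * θ ^ 2 := by
    rw [Real.sqrt_lt' (by linarith)]
    have := sosQuartic_one_pos hθ
    simp only [sosQuartic] at this
    nlinarith
  rw [sosQuartic_zeroSet_eq_union hθ hs hs0.le (by linarith), encard_union_eq,
    encard_quadraticZeroSet (by positivity) (discrim_pos_of_two_mul_lt (by positivity)
      (by linarith)),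
    encard_quadraticZeroSet (by positivity) (discrim_pos_of_two_mul_lt (by positivity)
      (by linarith))]
  · rfl
  refine disjoint_left.2 fun x hp hn ↦ ?_
  have hx := pos_of_mem_quadraticZeroSet (by positivity) (by linarith) (by positivity) hp
  simp only [quadraticZeroSet, mem_ofPred_eq] at hp hn
  nlinarith [mul_pos hs0 hx]

end SosQuartic

section SolutionSet

variable {θ : ℝ}

theorem mem_sosSolutionSet_iff (hθ : 0 < θ) {x y : ℝ} :
    (x, y) ∈ sosSolutionSet θ ↔ 0 < x ∧ 0 < y ∧
      x * (θ ^ 2 * x ^ 2 + θ * y ^ 2 + 1) = x ^ 2 + θ * y ^ 2 + θ ^ 2 ∧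
      y * (θ ^ 2 * x ^ 2 + θ * y ^ 2 + 1) = θ * x ^ 2 + y ^ 2 + θ := by
  have hD : θ ^ 2 * x ^ 2 + θ * y ^ 2 + 1 ≠ 0 := by positivity
  simp only [sosSolutionSet, mem_ofPred_eq, eq_div_iff hD]

theorem mk_one_mem_sosSolutionSet_iff (hθ : 0 < θ) {y : ℝ} :
    (1, y) ∈ sosSolutionSet θ ↔ y ∈ (sosCubic θ).zeroSet := by
  rw [mem_sosSolutionSet_iff hθ, mem_sosCubic_zeroSet]
  refine ⟨fun ⟨_, _, _, h⟩ ↦ by linear_combination h, fun h ↦ ⟨one_pos, ?_, by ring, by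
    linear_combination h⟩⟩
  exact pos_of_mem_sosCubic_zeroSet hθ (mem_sosCubic_zeroSet.2 h)

-- Off the line `x = 1` the first equation forces `θ y² = x - θ²(x² + x + 1)`, and then the
-- second one forces `y = x / (θ (x + 1))`; substituting back leaves the quartic.
theorem mem_sosSolutionSet_iff_of_ne_one (hθ : 0 < θ) {x y : ℝ} (hx : x ≠ 1) :
    (x, y) ∈ sosSolutionSet θ ↔ 0 < x ∧ sosQuartic θ x = 0 ∧ y = x / (θ * (x + 1)) := by
  rw [mem_sosSolutionSet_iff hθ]
  constructor
  · rintro ⟨hx0, hy0, e1, e2⟩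
    have hF : θ ^ 2 * (x ^ 2 + x + 1) + θ * y ^ 2 - x = 0 := by
      refine (mul_eq_zero.1 ?_).resolve_left (sub_ne_zero.2 hx)
      linear_combination e1
    have hθ1 : 0 < 1 - θ ^ 2 := by
      have : 0 < (1 - θ ^ 2) * (x + 1) := by nlinarith [mul_pos hθ (mul_pos hy0 hy0)]
      exact pos_of_mul_pos_left this (by linarith)
    have hy : y * (θ * (x + 1)) = x := by
      refine mul_left_cancel₀ hθ1.ne' ?_
      linear_combination θ * e2 + (1 - θ * y) * hF
    refine ⟨hx0, ?_, (eq_div_iff (by positivity)).2 hy⟩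
    simp only [sosQuartic]
    linear_combination θ * (x + 1) ^ 2 * hF - (x + θ * (x + 1) * y) * hy
  · rintro ⟨hx0, hQ, rfl⟩
    have hy : x / (θ * (x + 1)) * (θ * (x + 1)) = x := div_mul_cancel₀ x (by positivity)
    set y := x / (θ * (x + 1))
    have hF : θ ^ 2 * (x ^ 2 + x + 1) + θ * y ^ 2 - x = 0 := by
      refine (mul_eq_zero.1 ?_).resolve_left (by positivity : θ * (x + 1) ^ 2 ≠ 0)
      simp only [sosQuartic] at hQ
      linear_combination hQ + (x + θ * (x + 1) * y) * hy
    refine ⟨hx0, by positivity, by linear_combination (x - 1) * hF, ?_⟩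
    refine mul_left_cancel₀ hθ.ne' ?_
    linear_combination (1 - θ ^ 2) * hy + (θ * y - 1) * hF

theorem sosSolutionSet_eq_union (hθ : 0 < θ) :
    sosSolutionSet θ = (fun y ↦ (1, y)) '' (sosCubic θ).zeroSet ∪
      (fun x ↦ (x, x / (θ * (x + 1)))) '' {x | 0 < x ∧ sosQuartic θ x = 0} := by
  ext ⟨x, y⟩
  simp only [mem_union, mem_image, Prod.mk.injEq, mem_ofPred_eq]
  rcases eq_or_ne x 1 with rfl | hx
  · rw [mk_one_mem_sosSolutionSet_iff hθ]
    refine ⟨fun h ↦ .inl ⟨y, h, rfl, rfl⟩, ?_⟩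
    rintro (⟨y, h, -, rfl⟩ | ⟨x, ⟨-, hQ⟩, rfl, -⟩)
    · exact h
    · exact absurd hQ (sosQuartic_one_pos hθ).ne'
  · rw [mem_sosSolutionSet_iff_of_ne_one hθ hx]
    refine ⟨fun ⟨hx0, hQ, hy⟩ ↦ .inr ⟨x, ⟨hx0, hQ⟩, rfl, hy.symm⟩, ?_⟩
    rintro (⟨-, -, h, -⟩ | ⟨x, ⟨hx0, hQ⟩, rfl, rfl⟩)
    · exact absurd h.symm hx
    · exact ⟨hx0, hQ, rfl⟩

theorem encard_sosSolutionSet (hθ : 0 < θ) :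
    (sosSolutionSet θ).encard =
      (sosCubic θ).zeroSet.encard + {x | 0 < x ∧ sosQuartic θ x = 0}.encard := by
  have hinj : Function.Injective fun x ↦ (x, x / (θ * (x + 1))) :=
    fun _ _ h ↦ congrArg Prod.fst h
  rw [sosSolutionSet_eq_union hθ, encard_union_eq, (Prod.mk_right_injective 1).encard_image,
    hinj.encard_image]
  refine disjoint_left.2 ?_
  rintro _ ⟨y, -, rfl⟩ ⟨x, ⟨-, hQ⟩, hx⟩
  obtain rfl : x = 1 := congrArg Prod.fst hx
  exact (sosQuartic_one_pos hθ).ne' hQ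

end SolutionSet

theorem strictMono_cube_add_sq_add_three_mul_sub_one :
    StrictMono fun t : ℝ ↦ t ^ 3 + t ^ 2 + 3 * t - 1 := by
  refine strictMono_of_deriv_pos fun t ↦ ?_
  simp (disch := fun_prop)
  nlinarith [sq_nonneg (3 * t + 1)]

theorem sos_number_of_TISGMs_general (θc' : ℝ)
    (hroot : θc' ^ 3 + θc' ^ 2 + 3 * θc' - 1 = 0) :
    ∃ θc : ℝ, θc ∈ Set.Ioo (0.141 : ℝ) 0.142 ∧ θc < θc' ∧
      ∀ θ : ℝ, 0 < θ →
        (θc' < θ → (sosSolutionSet θ).ncard = 1) ∧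
        (θ = θc' → (sosSolutionSet θ).ncard = 3) ∧
        (θc < θ → θ < θc' → (sosSolutionSet θ).ncard = 5) ∧
        (θ = θc → (sosSolutionSet θ).ncard = 6) ∧
        (θ < θc → (sosSolutionSet θ).ncard = 7) := by
  obtain ⟨θc, ⟨h141, h142⟩, hdiscr_zero, hdiscr_pos, hdiscr_neg⟩ :=
    exists_sosCubic_discr_sign_change
  have hg := strictMono_cube_add_sq_add_three_mul_sub_one
  have hg_neg (θ : ℝ) : θ < θc' → θ ^ 3 + θ ^ 2 + 3 * θ - 1 < 0 := hroot ▸ (hg ·)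
  have hg_pos (θ : ℝ) : θc' < θ → 0 < θ ^ 3 + θ ^ 2 + 3 * θ - 1 := hroot ▸ (hg ·)
  have hθc' : 0.142 < θc' := hg.lt_iff_lt.1 (by rw [hroot]; norm_num)
  refine ⟨θc, ⟨h141, h142⟩, h142.trans hθc', fun θ hθ ↦ ?_⟩
  obtain ⟨r, hr⟩ := exists_mem_sosCubic_zeroSet hθ
  have count (m n : ℕ) (hC : (sosCubic θ).zeroSet.encard = m)
      (hQ : {x | 0 < x ∧ sosQuartic θ x = 0}.encard = n) : (sosSolutionSet θ).ncard = m + n := by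
    rw [ncard_def, encard_sosSolutionSet hθ, hC, hQ]
    rfl
  refine ⟨fun h ↦ count 1 0 ?_ ?_, fun h ↦ count 1 2 ?_ ?_, fun h₁ h₂ ↦ count 1 4 ?_ ?_,
    fun h ↦ count 2 4 ?_ ?_, fun h ↦ count 3 4 ?_ ?_⟩
  · exact Cubic.encard_zeroSet_of_discr_neg hr (hdiscr_neg θ (by linarith))
  · rw [sosQuartic_zeroSet_eq_empty hθ (hg_pos θ h), encard_empty]; rfl
  · exact Cubic.encard_zeroSet_of_discr_neg hr (hdiscr_neg θ (by linarith))
  · exact encard_sosQuartic_zeroSet_of_eq_zero hθ (h ▸ hroot)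
  · exact Cubic.encard_zeroSet_of_discr_neg hr (hdiscr_neg θ h₁)
  · exact encard_sosQuartic_zeroSet_of_neg hθ (hg_neg θ h₂)
  · subst h
    refine Cubic.encard_zeroSet_of_discr_eq_zero hθ.ne' hr hdiscr_zero ?_
    simp only [sosCubic]
    nlinarith
  · exact encard_sosQuartic_zeroSet_of_neg hθ (hg_neg θ (by linarith))
  · exact Cubic.encard_zeroSet_of_discr_pos hθ.ne' hr (hdiscr_pos θ hθ h)
  · exact encard_sosQuartic_zeroSet_of_neg hθ (hg_neg θ (by linarith))

/-- With `θ_c'` the unique real root of `t³ + t² + 3t - 1 = 0`, there is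
`θ_c ∈ (0.141, 0.142)` with `θ_c < θ_c'` such that the boundary-law system has exactly
1, 3, 5, 6, 7 positive solutions according as `θ > θ_c'`, `θ = θ_c'`, `θ_c < θ < θ_c'`,
`θ = θ_c`, `θ < θ_c`. -/
theorem sos_number_of_TISGMs (θc' : ℝ)
    (hroot : θc' ^ 3 + θc' ^ 2 + 3 * θc' - 1 = 0)
    (huniq : ∀ t : ℝ, t ^ 3 + t ^ 2 + 3 * t - 1 = 0 → t = θc') :
    ∃ θc : ℝ, θc ∈ Set.Ioo (0.141 : ℝ) 0.142 ∧ θc < θc' ∧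
      ∀ θ : ℝ, 0 < θ →
        (θc' < θ → (sosSolutionSet θ).ncard = 1) ∧
        (θ = θc' → (sosSolutionSet θ).ncard = 3) ∧
        (θc < θ → θ < θc' → (sosSolutionSet θ).ncard = 5) ∧
        (θ = θc → (sosSolutionSet θ).ncard = 6) ∧
        (θ < θc → (sosSolutionSet θ).ncard = 7) :=
  sos_number_of_TISGMs_general θc' hroot
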